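/- arXiv:1409.0315 — 6 statements merged into one kernel-verified Lean document; each statement's English description precedes it below -/
import Mathlib

section
/- Let v₁, …, v_k be points in the Euclidean plane ℝ² such that for all 1 ≤ i ≤ j ≤ k−1 the inner product ⟪v_{i+1} − v_i, v_{j+1} − v_j⟫ ≥ 0 (i.e., any two edge vectors of the polyline form an angle of at most 90°). Then the polyline (v₁, …, v_k) has increasing chords; in particular, for all indices 1 ≤ a ≤ b ≤ c ≤ d ≤ k it holds dist(v_b, v_c) ≤ dist(v_a, v_d). -/
/-!
Telescoping writes every chord `v b - v a` (`a ≤ b`) as a sum of edge vectors, so any two chords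
have a non-negative inner product; this survives reversing the path. The vertex conditions for
self-approaching paths are instances of it, and for `a ≤ b ≤ c ≤ d` it gives
`‖v d - v a‖² = ‖x + y + z‖² ≥ ‖y‖²` with `x, y, z` the chords `ab, bc, cd`.
-/

open Real EuclideanGeometry
open scoped RealInnerProductSpace

noncomputable section

abbrev Pt : Type := EuclideanSpace ℝ (Fin 2)

/-- Vertex characterization of self-approaching polylines: `v 0, v 1, …, v (n-1)`
is self-approaching if for all `i < j ≤ n-1`, `⟪v (i+1) - v i, v j - v (i+1)⟫ ≥ 0`. -/
def SelfApproachingPts (n : ℕ) (v : ℕ → Pt) : Prop :=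
  ∀ i j : ℕ, i < j → j < n → 0 ≤ ⟪v (i + 1) - v i, v j - v (i + 1)⟫

/-- A polyline has increasing chords if both it and its reverse are self-approaching. -/
def IncreasingChordsPts (n : ℕ) (v : ℕ → Pt) : Prop :=
  SelfApproachingPts n v ∧ SelfApproachingPts n (fun i => v (n - 1 - i))

section InnerProductSpace

variable {E : Type*} [NormedAddCommGroup E] [InnerProductSpace ℝ E]

theorem norm_le_norm_add_add_of_inner_nonneg {x y z : E} (hxy : 0 ≤ ⟪x, y⟫)
    (hxz : 0 ≤ ⟪x, z⟫) (hyz : 0 ≤ ⟪y, z⟫) : ‖y‖ ≤ ‖x + y + z‖ := by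
  have hsq : ‖x + y + z‖ ^ 2 = ‖x‖ ^ 2 + ‖y‖ ^ 2 + ‖z‖ ^ 2 + 2 * ⟪x, y⟫ + 2 * ⟪x, z⟫ + 2 * ⟪y, z⟫ := by
    rw [norm_add_sq_real, norm_add_sq_real, inner_add_left]
    ring
  refine le_of_sq_le_sq ?_ (norm_nonneg _)
  rw [hsq]
  nlinarith [sq_nonneg ‖x‖, sq_nonneg ‖z‖]

def ChordsInnerNonneg (n : ℕ) (v : ℕ → E) : Prop :=
  ∀ a b c d : ℕ, a ≤ b → b < n → c ≤ d → d < n → 0 ≤ ⟪v b - v a, v d - v c⟫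

theorem chordsInnerNonneg_of_edges {n : ℕ} {v : ℕ → E}
    (h : ∀ i j : ℕ, i ≤ j → j + 1 < n → 0 ≤ ⟪v (i + 1) - v i, v (j + 1) - v j⟫) :
    ChordsInnerNonneg n v := by
  intro a b c d hab hbn hcd hdn
  rw [← Finset.sum_Ico_sub (f := v) hab, ← Finset.sum_Ico_sub (f := v) hcd, sum_inner]
  refine Finset.sum_nonneg fun i hi => ?_
  rw [inner_sum]
  refine Finset.sum_nonneg fun j hj => ?_
  rw [Finset.mem_Ico] at hi hj
  rcases le_total i j with hij | hji
  · exact h i j hij (by omega)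
  · rw [real_inner_comm]
    exact h j i hji (by omega)

namespace ChordsInnerNonneg

variable {n : ℕ} {v : ℕ → E}

theorem reverse (hv : ChordsInnerNonneg n v) : ChordsInnerNonneg n (fun i => v (n - 1 - i)) := by
  intro a b c d hab hbn hcd hdn
  have := hv (n - 1 - b) (n - 1 - a) (n - 1 - d) (n - 1 - c) (by omega) (by omega) (by omega)
    (by omega)
  rwa [← neg_sub, ← neg_sub (v (n - 1 - c)), inner_neg_neg]

theorem dist_le {a b c d : ℕ} (hv : ChordsInnerNonneg n v) (hab : a ≤ b) (hbc : b ≤ c)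
    (hcd : c ≤ d) (hdn : d < n) : dist (v b) (v c) ≤ dist (v a) (v d) := by
  rw [dist_comm, dist_comm (v a), dist_eq_norm, dist_eq_norm,
    show v d - v a = (v b - v a) + (v c - v b) + (v d - v c) by abel]
  exact norm_le_norm_add_add_of_inner_nonneg (hv a b b c hab (by omega) hbc (by omega))
    (hv a b c d hab (by omega) hcd hdn) (hv b c c d hbc (by omega) hcd hdn)

end ChordsInnerNonneg

end InnerProductSpace

theorem ChordsInnerNonneg.selfApproachingPts {n : ℕ} {v : ℕ → Pt} (hv : ChordsInnerNonneg n v) :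
    SelfApproachingPts n v :=
  fun i j hij hjn => hv i (i + 1) (i + 1) j (by omega) (by omega) hij hjn

/-- If any two edge vectors of the polyline form a non-negative inner product
(angle at most 90°), then the polyline has increasing chords; in particular
`dist (v b) (v c) ≤ dist (v a) (v d)` for `a ≤ b ≤ c ≤ d`. -/
theorem stmt0 (k : ℕ) (v : ℕ → Pt)
    (h : ∀ i j : ℕ, i ≤ j → j + 1 < k → 0 ≤ ⟪v (i + 1) - v i, v (j + 1) - v j⟫) :
    IncreasingChordsPts k v ∧
      ∀ a b c d : ℕ, a ≤ b → b ≤ c → c ≤ d → d < k →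
        dist (v b) (v c) ≤ dist (v a) (v d) := by
  have hv : ChordsInnerNonneg k v := chordsInnerNonneg_of_edges h
  exact ⟨⟨hv.selfApproachingPts, hv.reverse.selfApproachingPts⟩,
    fun _ _ _ _ hab hbc hcd hdk => hv.dist_le hab hbc hcd hdk⟩
end
end

section
/- Let ρ₁ = (v₁, …, v_k) and ρ₂ = (v_k, v_{k+1}, …, v_m) be polylines in ℝ² sharing the point v_k, and assume both ρ₁ and ρ₂ are self-approaching. Then the concatenation (v₁, …, v_k, v_{k+1}, …, v_m) is self-approaching if and only if every vertex of ρ₂ lies in front(ρ₁), i.e., if and only if ⟪v_{i+1} − v_i, v_j − v_{i+1}⟫ ≥ 0 for all 1 ≤ i ≤ k−1 and all k ≤ j ≤ m. -/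
open Real EuclideanGeometry
open scoped RealInnerProductSpace

noncomputable section

/-- Concatenation criterion: if `ρ₁ = (v 0, …, v (k-1))` and
`ρ₂ = (v (k-1), …, v (m-1))` are self-approaching, then the concatenation
`(v 0, …, v (m-1))` is self-approaching iff every vertex of `ρ₂` lies in
`front(ρ₁)`, i.e. iff `⟪v (i+1) - v i, v j - v (i+1)⟫ ≥ 0` for every edge
index `i` of `ρ₁` and every vertex index `j` of `ρ₂`. -/
theorem stmt2 (k m : ℕ) (hk : 1 ≤ k) (hkm : k ≤ m) (v : ℕ → Pt)
    (h1 : SelfApproachingPts k v)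
    (h2 : SelfApproachingPts (m - k + 1) (fun i => v (k - 1 + i))) :
    SelfApproachingPts m v ↔
      ∀ i j : ℕ, i + 1 < k → k - 1 ≤ j → j < m →
        0 ≤ ⟪v (i + 1) - v i, v j - v (i + 1)⟫ := by
  constructor
  · intro h i j hik hkj hjm
    exact h i j (by omega) hjm
  · intro H i j hij hjm
    by_cases hjk : j < k
    · exact h1 i j hij hjk
    · by_cases hik : i + 1 < k
      · exact H i j hik (by omega) hjm
      · have := h2 (i - (k - 1)) (j - (k - 1)) (by omega) (by omega)
        simpa [show k - 1 + (i - (k - 1) + 1) = i + 1 by omega,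
          show k - 1 + (i - (k - 1)) = i by omega,
          show k - 1 + (j - (k - 1)) = j by omega] using this
end
end

section
/- Let n ≥ 4 and let p : ZMod n → ℝ² be pairwise distinct points (the vertices of a polygon in cyclic order). Suppose that for every pair of distinct indices s, t, at least one of the two boundary polylines of the polygon from p_s to p_t (the one through p_{s+1}, p_{s+2}, …, and the one through p_{s−1}, p_{s−2}, …) is self-approaching. Then there do not exist indices i and j with j ∉ {i−1, i, i+1} such that both interior angles satisfy ∠ p_{i−1} p_i p_{i+1} < π/2 and ∠ p_{j−1} p_j p_{j+1} < π/2. In other words, in a self-approaching drawing of a polygon, no two non-consecutive angles can both be less than 90°. -/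
open Real EuclideanGeometry
open scoped RealInnerProductSpace

noncomputable section

/-! Take `s = j + 1` and `t = j - 1`. The boundary path from `s` to `t` through `s + 1, s + 2, …`
passes through `i - 1, i, i + 1` consecutively, while the other one is `j + 1, j, j - 1`. A
self-approaching polyline has no acute angle at an interior vertex, because
`⟪v (k+1) - v k, v (k+2) - v (k+1)⟫ ≥ 0`; so whichever path is self-approaching forces the angle
at `i` or at `j` to be at least `π / 2`. -/

theorem InnerProductGeometry.pi_div_two_le_angle_of_inner_nonpos {V : Type*}
    [NormedAddCommGroup V] [InnerProductSpace ℝ V] {x y : V} (h : ⟪x, y⟫ ≤ 0) :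
    π / 2 ≤ InnerProductGeometry.angle x y := by
  rw [InnerProductGeometry.angle, ← not_lt, arccos_lt_pi_div_two, not_lt]
  exact div_nonpos_of_nonpos_of_nonneg h (by positivity)

theorem ZMod.val_lt_sub_two {n : ℕ} [NeZero n] {x : ZMod n} (h₁ : x ≠ -1) (h₂ : x ≠ -2) :
    x.val < n - 2 := by
  have hcast (k : ℕ) : ((x.val + k : ℕ) : ZMod n) = x + k := by
    push_cast; rw [ZMod.natCast_zmod_val]
  have hlt := x.val_lt
  by_contra! hge
  obtain h | h : x.val + 1 = n ∨ x.val + 2 = n := by omega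
  · exact h₁ (eq_neg_of_add_eq_zero_left (by simpa [h] using (hcast 1).symm))
  · exact h₂ (eq_neg_of_add_eq_zero_left (by simpa [h] using (hcast 2).symm))

theorem ZMod.val_neg_two {n : ℕ} (hn : 2 ≤ n) : (-2 : ZMod n).val = n - 2 := by
  have : (-2 : ZMod n) = ((n - 2 : ℕ) : ZMod n) := by
    rw [Nat.cast_sub hn, ZMod.natCast_self]; simp
  rw [this, ZMod.val_cast_of_lt (by omega)]

theorem SelfApproachingPts.pi_div_two_le_angle {m : ℕ} {v : ℕ → Pt}
    (h : SelfApproachingPts m v) {k : ℕ} (hk : k + 2 < m) :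
    π / 2 ≤ ∠ (v k) (v (k + 1)) (v (k + 2)) := by
  apply InnerProductGeometry.pi_div_two_le_angle_of_inner_nonpos
  have := h k (k + 2) (by omega) hk
  rw [vsub_eq_sub, vsub_eq_sub, ← neg_sub, inner_neg_left]
  linarith

section Polygon

variable {n : ℕ} [NeZero n] {p : ZMod n → Pt} {s t i : ZMod n}

theorem pi_div_two_le_angle_of_selfApproaching_forward
    (h : SelfApproachingPts ((t - s).val + 1) (fun k => p (s + (k : ZMod n))))
    (hi₀ : (i - s).val ≠ 0) (hit : (i - s).val < (t - s).val) :
    π / 2 ≤ ∠ (p (i - 1)) (p i) (p (i + 1)) := by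
  obtain ⟨k, hk⟩ := Nat.exists_eq_add_one_of_ne_zero hi₀
  have hks : (k : ZMod n) + 1 = i - s := by
    rw [← ZMod.natCast_zmod_val (i - s), hk]; push_cast; rfl
  convert h.pi_div_two_le_angle (k := k) (by omega) using 3 <;> push_cast <;>
    linear_combination -hks

theorem pi_div_two_le_angle_of_selfApproaching_backward
    (h : SelfApproachingPts ((s - t).val + 1) (fun k => p (s - (k : ZMod n))))
    (hi₀ : (s - i).val ≠ 0) (hit : (s - i).val < (s - t).val) :
    π / 2 ≤ ∠ (p (i - 1)) (p i) (p (i + 1)) := by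
  obtain ⟨k, hk⟩ := Nat.exists_eq_add_one_of_ne_zero hi₀
  have hks : (k : ZMod n) + 1 = s - i := by
    rw [← ZMod.natCast_zmod_val (s - i), hk]; push_cast; rfl
  rw [angle_comm]
  convert h.pi_div_two_le_angle (k := k) (by omega) using 3 <;> push_cast <;>
    linear_combination hks

end Polygon

theorem stmt3_general (n : ℕ) (hn : 4 ≤ n) (p : ZMod n → Pt)
    (hsa : ∀ s t : ZMod n, s ≠ t →
      SelfApproachingPts ((t - s).val + 1) (fun i => p (s + (i : ZMod n))) ∨
      SelfApproachingPts ((s - t).val + 1) (fun i => p (s - (i : ZMod n)))) :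
    ¬ ∃ i j : ZMod n, j ≠ i - 1 ∧ j ≠ i ∧ j ≠ i + 1 ∧
      ∠ (p (i - 1)) (p i) (p (i + 1)) < π / 2 ∧
      ∠ (p (j - 1)) (p j) (p (j + 1)) < π / 2 := by
  have : NeZero n := ⟨by omega⟩
  rintro ⟨i, j, hj₁, hj₂, hj₃, hi, hj⟩
  have hval_one : (1 : ZMod n).val = 1 := by
    rw [ZMod.val_one_eq_one_mod, Nat.mod_eq_of_lt (by omega)]
  have hval_two : (2 : ZMod n).val = 2 := by
    rw [ZMod.val_two_eq_two_mod, Nat.mod_eq_of_lt (by omega)]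
  have hne : j + 1 ≠ j - 1 := by
    intro h
    have : (2 : ZMod n) = 0 := by linear_combination h
    simp [this] at hval_two
  rcases hsa (j + 1) (j - 1) hne with hfwd | hbwd
  · refine hi.not_ge (pi_div_two_le_angle_of_selfApproaching_forward hfwd ?_ ?_)
    · rw [ne_eq, ZMod.val_eq_zero, sub_eq_zero]
      rintro rfl; simp at hj₁
    · rw [show j - 1 - (j + 1) = -2 by ring, ZMod.val_neg_two (by omega)]
      apply ZMod.val_lt_sub_two
      · intro h; apply hj₂; linear_combination -h
      · intro h; apply hj₃; linear_combination -h
  · refine hj.not_ge (pi_div_two_le_angle_of_selfApproaching_backward hbwd ?_ ?_)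
    · rw [show j + 1 - j = 1 by ring, hval_one]; omega
    · rw [show j + 1 - j = 1 by ring, show j + 1 - (j - 1) = 2 by ring, hval_one, hval_two]
      omega

/-- In a self-approaching drawing of a polygon (for every pair of distinct
vertices, one of the two boundary polylines between them is self-approaching),
no two non-consecutive interior angles can both be less than 90°. -/
theorem stmt3 (n : ℕ) (hn : 4 ≤ n) (p : ZMod n → Pt) (hp : Function.Injective p)
    (hsa : ∀ s t : ZMod n, s ≠ t →
      SelfApproachingPts ((t - s).val + 1) (fun i => p (s + (i : ZMod n))) ∨
      SelfApproachingPts ((s - t).val + 1) (fun i => p (s - (i : ZMod n)))) :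
    ¬ ∃ i j : ZMod n, j ≠ i - 1 ∧ j ≠ i ∧ j ≠ i + 1 ∧
      ∠ (p (i - 1)) (p i) (p (i + 1)) < π / 2 ∧
      ∠ (p (j - 1)) (p j) (p (j + 1)) < π / 2 :=
  stmt3_general n hn p hsa
end
end

section
/- Let 0 < ε < π/2, let k ≥ 1, and let θ₁ > θ₂ > … > θ_k be reals with θ₁ − θ_k ≤ ε. Place v₀ at the origin of ℝ² and v_i = (cos θ_i, sin θ_i) for 1 ≤ i ≤ k. Then this straight-line drawing of the triangular fan with vertices v₀, v₁, …, v_k and edges v₀v_i (1 ≤ i ≤ k) and v_iv_{i+1} (1 ≤ i < k) is an increasing-chord drawing: for every two vertices there is a path in the fan whose image polyline has increasing chords. -/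
open Real EuclideanGeometry
open scoped RealInnerProductSpace

noncomputable section

def IncreasingChordsList (l : List Pt) : Prop :=
  IncreasingChordsPts l.length (fun i => l.getD i 0)

def IsIncreasingChordDrawing {V : Type*} (G : SimpleGraph V) (f : V → Pt) : Prop :=
  Function.Injective f ∧ ∀ s t : V, s ≠ t →
    ∃ w : G.Walk s t, w.IsPath ∧ IncreasingChordsList (w.support.map f)

/-- The triangular fan graph on vertices `0, 1, …, k` with root `0`:
edges `0 - i` for `1 ≤ i ≤ k` and `i - (i+1)` for `1 ≤ i < k`. -/
def fanGraph (k : ℕ) : SimpleGraph (Fin (k + 1)) :=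
  SimpleGraph.fromRel (fun i j => (i = 0 ∧ j ≠ 0) ∨ (i ≠ 0 ∧ (i : ℕ) + 1 = (j : ℕ)))

/-! On the unit circle, with `u θ = (cos θ, sin θ)`,
`⟪u β - u α, u γ - u β⟫ = 4 sin ((α - β) / 2) sin ((β - γ) / 2) cos ((α - γ) / 2)`,
which is nonnegative as soon as `β` lies between `α` and `γ` and `|α - γ| ≤ π`. So a polyline
visiting points of an arc of length at most `π` in angular order has increasing chords. Two rim
vertices of the fan are joined along the rim, whose angles are monotone with spread `< π / 2`;
the root is joined to any vertex by an edge; and distinct rim vertices have distinct images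
because their angles are distinct and differ by less than `2π`. -/

open Set

def circlePt (θ : ℝ) : Pt :=
  EuclideanSpace.single (0 : Fin 2) (cos θ) + EuclideanSpace.single (1 : Fin 2) (sin θ)

theorem inner_circlePt (α β : ℝ) : ⟪circlePt α, circlePt β⟫ = cos (α - β) := by
  simp [circlePt, inner_add_left, inner_add_right, EuclideanSpace.inner_single_right, cos_sub,
    mul_comm]

theorem circlePt_ne_zero (θ : ℝ) : circlePt θ ≠ 0 := by
  intro h
  simpa [h] using inner_circlePt θ θ

theorem eq_of_circlePt_eq {α β : ℝ} (h : circlePt α = circlePt β)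
    (hαβ : |α - β| < 2 * π) : α = β := by
  have hcos : cos (α - β) = 1 := by
    rw [← inner_circlePt, h, inner_circlePt, sub_self, cos_zero]
  rw [abs_lt] at hαβ
  linarith [(cos_eq_one_iff_of_lt_of_lt hαβ.1 hαβ.2).1 hcos]

theorem cos_two_mul_add_cos_two_mul_sub_cos_two_mul_add (x y : ℝ) :
    cos (2 * x) + cos (2 * y) - cos (2 * (x + y)) - 1 =
      4 * sin x * sin y * cos (x + y) := by
  rw [mul_add, cos_add, cos_two_mul, cos_two_mul, sin_two_mul, sin_two_mul, cos_add]
  linear_combination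
    4 * sin y ^ 2 * sin_sq_add_cos_sq x + (4 - 4 * cos x ^ 2) * sin_sq_add_cos_sq y

theorem inner_sub_circlePt_sub_circlePt (α β γ : ℝ) :
    ⟪circlePt β - circlePt α, circlePt γ - circlePt β⟫ =
      4 * sin ((α - β) / 2) * sin ((β - γ) / 2) * cos ((α - γ) / 2) := by
  have h := cos_two_mul_add_cos_two_mul_sub_cos_two_mul_add ((α - β) / 2) ((β - γ) / 2)
  rw [show (α - β) / 2 + (β - γ) / 2 = (α - γ) / 2 by ring] at h
  simp only [mul_div_cancel₀ _ (two_ne_zero' ℝ)] at h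
  simp only [inner_sub_left, inner_sub_right, inner_circlePt, sub_self, cos_zero, ← h]
  ring

theorem inner_sub_circlePt_sub_circlePt_nonneg {α β γ : ℝ} (hβ : β ∈ uIcc α γ)
    (hαγ : |α - γ| ≤ π) :
    0 ≤ ⟪circlePt β - circlePt α, circlePt γ - circlePt β⟫ := by
  rw [inner_sub_circlePt_sub_circlePt]
  rw [abs_le] at hαγ
  have hcos : 0 ≤ cos ((α - γ) / 2) :=
    cos_nonneg_of_neg_pi_div_two_le_of_le (by linarith) (by linarith)
  have hsin : 0 ≤ sin ((α - β) / 2) * sin ((β - γ) / 2) := by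
    rcases mem_uIcc.1 hβ with ⟨hαβ, hβγ⟩ | ⟨hγβ, hβα⟩
    · exact mul_nonneg_of_nonpos_of_nonpos
        (sin_nonpos_of_nonpos_of_neg_pi_le (by linarith) (by linarith))
        (sin_nonpos_of_nonpos_of_neg_pi_le (by linarith) (by linarith))
    · exact mul_nonneg (sin_nonneg_of_nonneg_of_le_pi (by linarith) (by linarith))
        (sin_nonneg_of_nonneg_of_le_pi (by linarith) (by linarith))
  rw [mul_assoc 4, mul_assoc]
  positivity

theorem SelfApproachingPts.congr {n : ℕ} {v w : ℕ → Pt} (hv : SelfApproachingPts n v)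
    (hvw : ∀ m < n, v m = w m) : SelfApproachingPts n w := by
  intro i j hij hjn
  rw [← hvw (i + 1) (by omega), ← hvw i (by omega), ← hvw j hjn]
  exact hv i j hij hjn

theorem IncreasingChordsPts.congr {n : ℕ} {v w : ℕ → Pt} (hv : IncreasingChordsPts n v)
    (hvw : ∀ m < n, v m = w m) : IncreasingChordsPts n w :=
  ⟨hv.1.congr hvw, hv.2.congr fun m hm => hvw _ (by omega)⟩

theorem IncreasingChordsPts.rev {n : ℕ} {v : ℕ → Pt} (hv : IncreasingChordsPts n v) :
    IncreasingChordsPts n (fun i => v (n - 1 - i)) :=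
  ⟨hv.2, hv.1.congr fun m hm => by simp only; congr 1; omega⟩

theorem IncreasingChordsList.reverse {l : List Pt} (hl : IncreasingChordsList l) :
    IncreasingChordsList l.reverse := by
  unfold IncreasingChordsList at *
  rw [List.length_reverse]
  exact hl.rev.congr fun m hm => congrFun (List.getD_reverse m hm).symm 0

theorem increasingChordsList_map_range {n : ℕ} {v : ℕ → Pt} :
    IncreasingChordsList ((List.range n).map v) ↔ IncreasingChordsPts n v := by
  have hget : ∀ m < n, ((List.range n).map v).getD m 0 = v m := fun m hm => by
    rw [List.getD_eq_getElem _ _ (by simpa using hm)]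
    simp
  unfold IncreasingChordsList
  rw [List.length_map, List.length_range]
  exact ⟨fun h => h.congr hget, fun h => h.congr fun m hm => (hget m hm).symm⟩

theorem increasingChordsPts_two (v : ℕ → Pt) : IncreasingChordsPts 2 v := by
  have h : ∀ w : ℕ → Pt, SelfApproachingPts 2 w := fun w i j hij hj => by
    obtain ⟨rfl, rfl⟩ : i = 0 ∧ j = 1 := by omega
    simp
  exact ⟨h _, h _⟩

theorem selfApproachingPts_circlePt {n : ℕ} {g : ℕ → ℝ}
    (hbetween : ∀ i j, i < j → j < n → g (i + 1) ∈ uIcc (g i) (g j))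
    (hspread : ∀ i < n, ∀ j < n, |g i - g j| ≤ π) :
    SelfApproachingPts n (fun i => circlePt (g i)) := fun i j hij hjn =>
  inner_sub_circlePt_sub_circlePt_nonneg (hbetween i j hij hjn) (hspread i (by omega) j hjn)

theorem increasingChordsPts_circlePt {n : ℕ} {g : ℕ → ℝ} (hg : AntitoneOn g (Iio n))
    (hspread : ∀ i < n, ∀ j < n, |g i - g j| ≤ π) :
    IncreasingChordsPts n (fun i => circlePt (g i)) := by
  refine ⟨selfApproachingPts_circlePt (fun i j hij hjn => ?_) hspread,
    selfApproachingPts_circlePt (fun i j hij hjn => ?_)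
      fun i hi j hj => hspread _ (by omega) _ (by omega)⟩
  · exact mem_uIcc.2 <| .inr ⟨hg (mem_Iio.2 (by omega)) (mem_Iio.2 hjn) hij,
      hg (mem_Iio.2 (by omega)) (mem_Iio.2 (by omega)) (by omega)⟩
  · exact mem_uIcc.2 <| .inl ⟨hg (mem_Iio.2 (by omega)) (mem_Iio.2 (by omega)) (by omega),
      hg (mem_Iio.2 (by omega)) (mem_Iio.2 (by omega)) (by omega)⟩

namespace SimpleGraph

variable {V : Type*} {G : SimpleGraph V}

def Walk.ofAdjSeq (p : ℕ → V) : (d : ℕ) → (∀ m < d, G.Adj (p m) (p (m + 1))) →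
    G.Walk (p 0) (p d)
  | 0, _ => .nil
  | d + 1, hp => (ofAdjSeq p d fun m hm => hp m (by omega)).concat (hp d d.lt_succ_self)

theorem Walk.support_ofAdjSeq (p : ℕ → V) (d : ℕ) (hp : ∀ m < d, G.Adj (p m) (p (m + 1))) :
    (ofAdjSeq p d hp).support = (List.range (d + 1)).map p := by
  induction d with
  | zero => rfl
  | succ d ih =>
    rw [ofAdjSeq, support_concat, ih, List.range_succ (n := d + 1), List.map_append]
    rfl

theorem Walk.isPath_ofAdjSeq {p : ℕ → V} {d : ℕ} (hp : ∀ m < d, G.Adj (p m) (p (m + 1)))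
    (hinj : InjOn p (Iic d)) : (ofAdjSeq p d hp).IsPath := by
  rw [isPath_def, support_ofAdjSeq]
  refine List.Nodup.map_on (fun x hx y hy hxy => hinj ?_ ?_ hxy) List.nodup_range
  · simpa [Nat.lt_succ_iff] using hx
  · simpa [Nat.lt_succ_iff] using hy

theorem exists_isPath_increasingChords_of_adj (f : V → Pt) {s t : V} (h : G.Adj s t) :
    ∃ w : G.Walk s t, w.IsPath ∧ IncreasingChordsList (w.support.map f) := by
  refine ⟨.cons h .nil, by simpa using h.ne, ?_⟩
  simpa [IncreasingChordsList] using increasingChordsPts_two _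

theorem exists_isPath_increasingChords_symm {f : V → Pt} {s t : V}
    (h : ∃ w : G.Walk s t, w.IsPath ∧ IncreasingChordsList (w.support.map f)) :
    ∃ w : G.Walk t s, w.IsPath ∧ IncreasingChordsList (w.support.map f) := by
  obtain ⟨w, hw, hic⟩ := h
  refine ⟨w.reverse, (Walk.isPath_reverse_iff w).2 hw, ?_⟩
  simpa only [Walk.support_reverse, List.map_reverse] using hic.reverse

end SimpleGraph

open SimpleGraph

section Fan

variable {k : ℕ}

theorem fanGraph_adj_zero {i : Fin (k + 1)} (hi : i ≠ 0) : (fanGraph k).Adj 0 i :=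
  ⟨hi.symm, Or.inl (Or.inl ⟨rfl, hi⟩)⟩

theorem fanGraph_adj_of_val_add_one {i j : Fin (k + 1)} (hi : i ≠ 0) (hij : (i : ℕ) + 1 = j) :
    (fanGraph k).Adj i j :=
  ⟨fun h => by simp [h] at hij, Or.inl (Or.inr ⟨hi, hij⟩)⟩

theorem fanGraph_exists_rim_path {s t : Fin (k + 1)} (hs : s ≠ 0) (hst : s ≤ t) :
    ∃ w : (fanGraph k).Walk s t, w.IsPath ∧
      w.support = (List.range (t - s + 1)).map fun m => Fin.clamp (s + m) k := by
  have hs' : 0 < (s : ℕ) := Fin.pos_iff_ne_zero.2 hs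
  have hst' : (s : ℕ) ≤ t := hst
  have hk : (t : ℕ) ≤ k := Nat.lt_succ_iff.1 t.2
  have hp : ∀ m < (t : ℕ) - s,
      (fanGraph k).Adj (Fin.clamp (s + m) k) (Fin.clamp (s + (m + 1)) k) :=
    fun m hm => fanGraph_adj_of_val_add_one
      (Fin.ne_of_val_ne (by simp only [Fin.coe_clamp, Fin.val_zero]; omega))
      (by simp only [Fin.coe_clamp]; omega)
  have hinj : InjOn (fun m => Fin.clamp (s + m) k) (Iic (t - s)) := fun a ha b hb hab => by
    simp only [mem_Iic, Fin.ext_iff, Fin.coe_clamp] at ha hb hab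
    omega
  have h0 : Fin.clamp (s + 0) k = s := Fin.ext (by simp only [Fin.coe_clamp]; omega)
  have hd : Fin.clamp (s + (t - s)) k = t := Fin.ext (by simp only [Fin.coe_clamp]; omega)
  exact ⟨(Walk.ofAdjSeq _ _ hp).copy h0 hd,
    (Walk.isPath_copy _ _ _).2 (Walk.isPath_ofAdjSeq hp hinj),
    by rw [Walk.support_copy, Walk.support_ofAdjSeq]⟩

theorem fanGraph_exists_isPath_increasingChords_rim {θ : Fin (k + 1) → ℝ}
    {f : Fin (k + 1) → Pt} (hθ : AntitoneOn θ {0}ᶜ)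
    (hspread : ∀ i ∈ ({0}ᶜ : Set _), ∀ j ∈ ({0}ᶜ : Set _), |θ i - θ j| ≤ π)
    (hf : ∀ i ≠ 0, f i = circlePt (θ i)) {s t : Fin (k + 1)} (hs : s ≠ 0) (hst : s ≤ t) :
    ∃ w : (fanGraph k).Walk s t, w.IsPath ∧ IncreasingChordsList (w.support.map f) := by
  obtain ⟨w, hw, hsupp⟩ := fanGraph_exists_rim_path hs hst
  have hs' : 0 < (s : ℕ) := Fin.pos_iff_ne_zero.2 hs
  have hrim : ∀ m, Fin.clamp (s + m) k ≠ 0 := fun m =>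
    Fin.ne_of_val_ne (by simp only [Fin.coe_clamp, Fin.val_zero]; omega)
  refine ⟨w, hw, ?_⟩
  rw [hsupp, List.map_map, increasingChordsList_map_range]
  refine (increasingChordsPts_circlePt (g := fun m => θ (Fin.clamp (s + m) k))
    (fun a _ b _ hab => hθ (hrim a) (hrim b) (Fin.clamp_monotone (by omega)))
    fun a _ b _ => hspread _ (hrim a) _ (hrim b)).congr fun m _ => (hf _ (hrim m)).symm

end Fan

theorem injective_of_eq_circlePt {V : Type*} {o : V} {f : V → Pt} {θ : V → ℝ} (hfo : f o = 0)
    (hf : ∀ i ≠ o, f i = circlePt (θ i)) (hθ : InjOn θ {o}ᶜ)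
    (hspread : ∀ i ∈ ({o}ᶜ : Set V), ∀ j ∈ ({o}ᶜ : Set V), |θ i - θ j| < 2 * π) :
    Function.Injective f := by
  intro a b hab
  by_cases ha : a = o <;> by_cases hb : b = o
  · rw [ha, hb]
  · exact absurd (by rw [← hf b hb, ← hab, ha, hfo]) (circlePt_ne_zero (θ b))
  · exact absurd (by rw [← hf a ha, hab, hb, hfo]) (circlePt_ne_zero (θ a))
  · exact hθ ha hb
      (eq_of_circlePt_eq (by rw [← hf a ha, ← hf b hb, hab]) (hspread a ha b hb))

/-- Placing the fan root at the origin and the fan vertices on the unit circle at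
strictly decreasing angles spanning at most `ε < π/2` yields an
increasing-chord drawing of the triangular fan. -/
theorem stmt5 (ε : ℝ) (hε : ε < π / 2) (k : ℕ) (hk : 1 ≤ k)
    (θ : Fin (k + 1) → ℝ)
    (hmono : ∀ i j : Fin (k + 1), (0 : Fin (k + 1)) < i → i < j → θ j < θ i)
    (hspread : θ ⟨1, by omega⟩ - θ ⟨k, by omega⟩ ≤ ε)
    (f : Fin (k + 1) → Pt)
    (hf0 : f 0 = 0)
    (hfi : ∀ i : Fin (k + 1), i ≠ 0 →
      f i = EuclideanSpace.single (0 : Fin 2) (Real.cos (θ i)) +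
            EuclideanSpace.single (1 : Fin 2) (Real.sin (θ i))) :
    IsIncreasingChordDrawing (fanGraph k) f := by
  have hθ : StrictAntiOn θ {0}ᶜ := fun i hi j _ hij => hmono i j (Fin.pos_iff_ne_zero.2 hi) hij
  have hbounds : ∀ i ∈ ({0}ᶜ : Set _),
      θ ⟨k, by omega⟩ ≤ θ i ∧ θ i ≤ θ ⟨1, by omega⟩ := by
    intro i hi
    have hi1 : 1 ≤ (i : ℕ) := Nat.one_le_iff_ne_zero.2 (Fin.val_ne_of_ne hi)
    have hik : (i : ℕ) ≤ k := Nat.lt_succ_iff.1 i.2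
    exact ⟨hθ.antitoneOn hi (Fin.ne_of_val_ne (by simp only [Fin.val_zero]; omega)) hik,
      hθ.antitoneOn (Fin.ne_of_val_ne (by simp only [Fin.val_zero]; omega)) hi hi1⟩
  have hspan : ∀ i ∈ ({0}ᶜ : Set _), ∀ j ∈ ({0}ᶜ : Set _), |θ i - θ j| ≤ π :=
    fun i hi j hj => by
    rw [abs_le]
    constructor <;> linarith [hbounds i hi, hbounds j hj, pi_pos]
  refine ⟨injective_of_eq_circlePt hf0 hfi hθ.injOn fun i hi j hj => by
    linarith [hspan i hi j hj, pi_pos], fun s t hst => ?_⟩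
  wlog h : s < t generalizing s t
  · exact exists_isPath_increasingChords_symm (this t s hst.symm (by order))
  rcases eq_or_ne s 0 with rfl | hs
  · exact exists_isPath_increasingChords_of_adj f (fanGraph_adj_zero h.ne')
  · exact fanGraph_exists_isPath_increasingChords_rim hθ.antitoneOn hspan hfi hs h.le

end
end

section
/- Let 0 < ε < π/4 and let u₂, v₂, u₄, v₄ ∈ ℝ² be points such that u₂, v₂, u₄ are pairwise distinct and u₂, u₄, v₄ are pairwise distinct. Suppose ∠ u₂ v₂ u₄ ≤ ε, |∠ u₂ u₄ v₂ − π/2| ≤ ε, ∠ u₄ u₂ v₄ ≤ ε, and |∠ u₂ v₄ u₄ − π/2| ≤ ε. Then dist(u₄, v₄) ≤ (tan ε)² · dist(u₂, v₂). -/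
open Real EuclideanGeometry

noncomputable section

/-!
In a triangle whose angle at one vertex is at most `ε` and whose angle at a second vertex is
within `ε` of a right angle, the law of sines bounds the side opposite the small angle by
`sin ε / cos ε = tan ε` times the side opposite the near-right angle. Applying this to the
triangles `u₂ v₂ u₄` and `u₄ u₂ v₄`, which share the side `u₂ u₄`, gives the factor `(tan ε)²`.
-/

lemma Real.cos_le_sin_of_abs_sub_pi_div_two_le {ε θ : ℝ} (hε : ε ≤ π) (h : |θ - π / 2| ≤ ε) :
    cos ε ≤ sin θ := by
  rw [← cos_sub_pi_div_two, ← cos_abs (θ - π / 2)]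
  exact cos_le_cos_of_nonneg_of_le_pi (abs_nonneg _) hε h

namespace EuclideanGeometry

variable {V P : Type*} [NormedAddCommGroup V] [InnerProductSpace ℝ V] [MetricSpace P]
  [NormedAddTorsor V P]

theorem dist_le_tan_mul_dist_of_angle_le {ε : ℝ} (hε : ε < π / 2) {a b c : P}
    (hb : ∠ a b c ≤ ε) (hc : |∠ b c a - π / 2| ≤ ε) :
    dist c a ≤ tan ε * dist a b := by
  have hε₀ : 0 ≤ ε := (abs_nonneg _).trans hc
  have hcos : 0 < cos ε := cos_pos_of_mem_Ioo ⟨by linarith, hε⟩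
  rw [tan_eq_sin_div_cos, div_mul_eq_mul_div, le_div_iff₀ hcos]
  calc dist c a * cos ε
      ≤ dist c a * sin (∠ b c a) := by
        gcongr
        exact cos_le_sin_of_abs_sub_pi_div_two_le (by linarith) hc
    _ = sin (∠ a b c) * dist a b := by rw [mul_comm, law_sin]
    _ ≤ sin ε * dist a b := by
        gcongr
        exact sin_le_sin_of_le_of_le_pi_div_two (by linarith [angle_nonneg a b c]) hε.le hb

end EuclideanGeometry

theorem stmt10_general (ε : ℝ) (hε : ε < π / 4)
    (u₂ v₂ u₄ v₄ : Pt)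
    (ha1 : ∠ u₂ v₂ u₄ ≤ ε) (ha2 : |∠ u₂ u₄ v₂ - π / 2| ≤ ε)
    (ha3 : ∠ u₄ u₂ v₄ ≤ ε) (ha4 : |∠ u₂ v₄ u₄ - π / 2| ≤ ε) :
    dist u₄ v₄ ≤ (Real.tan ε) ^ 2 * dist u₂ v₂ := by
  have hε' : ε < π / 2 := hε.trans (by linarith [pi_pos])
  have htan : 0 ≤ tan ε :=
    tan_nonneg_of_nonneg_of_le_pi_div_two ((abs_nonneg _).trans ha2) hε'.le
  have hu₄ : dist u₄ u₂ ≤ tan ε * dist u₂ v₂ :=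
    dist_le_tan_mul_dist_of_angle_le hε' ha1 (by rwa [angle_comm])
  have hv₄ : dist v₄ u₄ ≤ tan ε * dist u₄ u₂ := dist_le_tan_mul_dist_of_angle_le hε' ha3 ha4
  calc dist u₄ v₄ = dist v₄ u₄ := dist_comm _ _
    _ ≤ tan ε * (tan ε * dist u₂ v₂) := hv₄.trans (by gcongr)
    _ = tan ε ^ 2 * dist u₂ v₂ := by ring

/-- Quantitative shrinking along the caterpillar: if `∠ u₂ v₂ u₄ ≤ ε`,
`∠ u₂ u₄ v₂` is within `ε` of `π/2`, `∠ u₄ u₂ v₄ ≤ ε` and `∠ u₂ v₄ u₄` is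
within `ε` of `π/2`, then `dist u₄ v₄ ≤ (tan ε)² · dist u₂ v₂`. -/
theorem stmt10 (ε : ℝ) (hε0 : 0 < ε) (hε : ε < π / 4)
    (u₂ v₂ u₄ v₄ : Pt)
    (h1 : u₂ ≠ v₂) (h2 : u₂ ≠ u₄) (h3 : v₂ ≠ u₄) (h4 : u₂ ≠ v₄) (h5 : u₄ ≠ v₄)
    (ha1 : ∠ u₂ v₂ u₄ ≤ ε) (ha2 : |∠ u₂ u₄ v₂ - π / 2| ≤ ε)
    (ha3 : ∠ u₄ u₂ v₄ ≤ ε) (ha4 : |∠ u₂ v₄ u₄ - π / 2| ≤ ε) :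
    dist u₄ v₄ ≤ (Real.tan ε) ^ 2 * dist u₂ v₂ :=
  stmt10_general ε hε u₂ v₂ u₄ v₄ ha1 ha2 ha3 ha4
end
end

section
/- Let 0 < ε < π/4 and let r, a, c ∈ ℝ² be pairwise distinct points with ∠ a r c ≤ ε and |∠ a c r − π/2| ≤ ε. Then dist(a, c) ≤ tan ε · dist(r, a). -/
open Real EuclideanGeometry

noncomputable section

lemma sin_angle_sub_neg_aux {V : Type*} [NormedAddCommGroup V] [InnerProductSpace ℝ V]
    (x y : V) :
    Real.sin (InnerProductGeometry.angle (x - y) (-y)) * (‖x - y‖ * ‖-y‖) =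
      Real.sin (InnerProductGeometry.angle x y) * (‖x‖ * ‖y‖) := by
  rw [InnerProductGeometry.sin_angle_mul_norm_mul_norm,
    InnerProductGeometry.sin_angle_mul_norm_mul_norm]
  congr 1
  simp only [inner_sub_left, inner_sub_right, inner_neg_left, inner_neg_right,
    real_inner_comm x y]
  ring

/-- Law-of-sines estimate (Lemma 12 (2)): if `∠ a r c ≤ ε` and `∠ a c r` is
within `ε` of `π/2`, then `dist a c ≤ tan ε · dist r a`. -/
theorem stmt11 (ε : ℝ) (hε0 : 0 < ε) (hε : ε < π / 4) (r a c : Pt)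
    (h1 : r ≠ a) (h2 : r ≠ c) (h3 : a ≠ c)
    (ha1 : ∠ a r c ≤ ε) (ha2 : |∠ a c r - π / 2| ≤ ε) :
    dist a c ≤ Real.tan ε * dist r a := by
  have hεlt : ε < π / 2 := hε.trans (by linarith [Real.pi_pos])
  have hcos : 0 < Real.cos ε := Real.cos_pos_of_mem_Ioo ⟨by linarith, hεlt⟩
  -- law of sines
  have key : Real.sin (∠ a c r) * (dist a c * dist r c) =
      Real.sin (∠ a r c) * (dist r a * dist r c) := by
    have h := sin_angle_sub_neg_aux (a -ᵥ r : Pt) (c -ᵥ r)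
    have e1 : (a -ᵥ r : Pt) - (c -ᵥ r) = a -ᵥ c := by
      simp [vsub_eq_sub]
    have e2 : -((c : Pt) -ᵥ r) = r -ᵥ c := by
      simp [vsub_eq_sub]
    rw [e1, e2] at h
    have hn1 : ‖(a : Pt) -ᵥ c‖ = dist a c := (dist_eq_norm_vsub _ a c).symm
    have hn2 : ‖(r : Pt) -ᵥ c‖ = dist r c := (dist_eq_norm_vsub _ r c).symm
    have hn3 : ‖(a : Pt) -ᵥ r‖ = dist a r := (dist_eq_norm_vsub _ a r).symm
    have hn4 : ‖(c : Pt) -ᵥ r‖ = dist c r := (dist_eq_norm_vsub _ c r).symm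
    unfold EuclideanGeometry.angle
    rw [hn1, hn2, hn3, hn4] at h
    rw [h, dist_comm a r, dist_comm c r]
  have hrc : (0 : ℝ) < dist r c := dist_pos.2 h2
  have hra : (0 : ℝ) ≤ dist r a := dist_nonneg
  -- bound sin (∠ a c r) from below by cos ε
  have hsinC : Real.cos ε ≤ Real.sin (∠ a c r) := by
    have : Real.sin (∠ a c r) = Real.cos (∠ a c r - π / 2) := by
      rw [Real.cos_sub]; simp
    rw [this, ← Real.cos_abs (∠ a c r - π / 2)]
    exact Real.cos_le_cos_of_nonneg_of_le_pi (abs_nonneg _)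
      (by linarith [Real.pi_pos]) ha2
  -- bound sin (∠ a r c) from above by sin ε
  have hsinR : Real.sin (∠ a r c) ≤ Real.sin ε := by
    have h0 : 0 ≤ ∠ a r c := EuclideanGeometry.angle_nonneg _ _ _
    exact Real.sin_le_sin_of_le_of_le_pi_div_two (by linarith) hεlt.le ha1
  have hsinCpos : 0 < Real.sin (∠ a c r) := lt_of_lt_of_le hcos hsinC
  -- from key: dist a c = sin(∠ a r c) / sin(∠ a c r) * dist r a
  have hdac : dist a c = Real.sin (∠ a r c) / Real.sin (∠ a c r) * dist r a := by
    field_simp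
    nlinarith [key]
  rw [hdac, Real.tan_eq_sin_div_cos]
  apply mul_le_mul_of_nonneg_right _ hra
  apply div_le_div₀ (Real.sin_nonneg_of_nonneg_of_le_pi (by linarith)
    (by linarith [Real.pi_pos])) hsinR hcos hsinC
end
end
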